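/- arXiv:1609.00173 — 2 statements merged into one kernel-verified Lean document; each statement's English description precedes it below -/
import Mathlib

section
/- Factorization of the Szegedy walk operator: let U = Σ_{i=0}^{N−1} e_i e_i† ⊗ U_i with each U_i an N×N unitary and U_i φ_i = e_b for all i for a fixed b ∈ {0,…,N−1}, and set D = I_N ⊗ (2 e_b e_b† − I_N). Then U_walk = S U† D U. -/
open Matrix BigOperators

/-- The `i`-th column state of the transition matrix `P`: `(φ_i)_j = √(P_{j,i})`. -/
noncomputable def colState {N : ℕ} (P : Matrix (Fin N) (Fin N) ℝ) (i : Fin N) :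
    Fin N → ℂ :=
  fun j => (Real.sqrt (P j i) : ℂ)

/-- The `i`-th projector state `ψ_i = e_i ⊗ φ_i ∈ ℂ^N ⊗ ℂ^N`. -/
noncomputable def projState {N : ℕ} (P : Matrix (Fin N) (Fin N) ℝ) (i : Fin N) :
    Fin N × Fin N → ℂ :=
  fun p => (if p.1 = i then 1 else 0) * colState P i p.2

/-- The projection `Π = Σ_i ψ_i ψ_i†`, as a matrix on `ℂ^N ⊗ ℂ^N`. -/
noncomputable def szegedyProj {N : ℕ} (P : Matrix (Fin N) (Fin N) ℝ) :
    Matrix (Fin N × Fin N) (Fin N × Fin N) ℂ :=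
  ∑ i : Fin N,
    Matrix.of (fun p q => projState P i p * (starRingEnd ℂ) (projState P i q))

/-- The swap operator `S` on `ℂ^N ⊗ ℂ^N`, determined by `S(u ⊗ v) = v ⊗ u`. -/
def swapOp (N : ℕ) : Matrix (Fin N × Fin N) (Fin N × Fin N) ℂ :=
  Matrix.of (fun p q => if p.1 = q.2 ∧ p.2 = q.1 then 1 else 0)

/-- The block-diagonal operator `U = Σ_i e_i e_i† ⊗ U_i` on `ℂ^N ⊗ ℂ^N`. -/
def blockDiag {N : ℕ} (Ui : Fin N → Matrix (Fin N) (Fin N) ℂ) :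
    Matrix (Fin N × Fin N) (Fin N × Fin N) ℂ :=
  Matrix.of (fun p q => if p.1 = q.1 then Ui p.1 p.2 q.2 else 0)

/-- The diagonal operator `D = I_N ⊗ (2 e_b e_b† − I_N)` on `ℂ^N ⊗ ℂ^N`. -/
def diagD (N : ℕ) (b : Fin N) : Matrix (Fin N × Fin N) (Fin N × Fin N) ℂ :=
  Matrix.of (fun p q =>
    (if p.1 = q.1 then 1 else 0) *
      (2 * (if p.2 = b then 1 else 0) * (if q.2 = b then 1 else 0) -
        (if p.2 = q.2 then 1 else 0)))

/-!
Both sides are block diagonal with respect to the first tensor factor. The blocks of `2Π - I`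
are the reflections `2 φ_i φ_i† - I`; those of `U† D U` are
`U_i† (2 e_b e_b† - I) U_i = 2 (U_i† e_b)(U_i† e_b)† - I`,
and `U_i† e_b = φ_i` by unitarity.
-/

section RankOneReflection

variable {n α : Type*} [Fintype n] [DecidableEq n] [CommRing α] [StarRing α]

def rankOneReflection (v : n → α) : Matrix n n α :=
  (2 : α) • vecMulVec v (star v) - 1

theorem conjTranspose_mul_rankOneReflection_mul {U : Matrix n n α}
    (hU : U ∈ unitaryGroup n α) (v : n → α) :
    Uᴴ * rankOneReflection v * U = rankOneReflection (Uᴴ *ᵥ v) := by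
  have hUU : Uᴴ * U = 1 := (mem_unitaryGroup_iff').1 hU
  simp only [rankOneReflection, Matrix.mul_sub, Matrix.sub_mul, Matrix.mul_smul,
    Matrix.smul_mul, mul_vecMulVec, vecMulVec_mul, Matrix.mul_one, hUU, star_mulVec,
    conjTranspose_conjTranspose]

theorem conjTranspose_mulVec_of_mulVec_eq {U : Matrix n n α} (hU : U ∈ unitaryGroup n α)
    {x y : n → α} (h : U *ᵥ x = y) : Uᴴ *ᵥ y = x := by
  rw [← h, mulVec_mulVec, ← star_eq_conjTranspose, (mem_unitaryGroup_iff').1 hU, one_mulVec]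

end RankOneReflection

theorem conjTranspose_blockDiag {N : ℕ} (A : Fin N → Matrix (Fin N) (Fin N) ℂ) :
    (blockDiag A)ᴴ = blockDiag (fun i => (A i)ᴴ) := by
  ext ⟨p₁, p₂⟩ ⟨q₁, q₂⟩
  by_cases h : p₁ = q₁ <;> simp [_root_.blockDiag, conjTranspose_apply, h, eq_comm]

theorem blockDiag_mul {N : ℕ} (A B : Fin N → Matrix (Fin N) (Fin N) ℂ) :
    blockDiag A * blockDiag B = blockDiag (fun i => A i * B i) := by
  ext ⟨p₁, p₂⟩ ⟨q₁, q₂⟩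
  by_cases h : p₁ = q₁ <;> simp [_root_.blockDiag, mul_apply, Fintype.sum_prod_type, h]

theorem diagD_eq_blockDiag (N : ℕ) (b : Fin N) :
    diagD N b = blockDiag (fun _ => rankOneReflection (Pi.single b 1)) := by
  ext ⟨p₁, p₂⟩ ⟨q₁, q₂⟩
  by_cases h : p₁ = q₁ <;>
    simp [diagD, _root_.blockDiag, rankOneReflection, vecMulVec_apply, Pi.single_apply,
      one_apply, h]

theorem two_smul_szegedyProj_sub_one {N : ℕ} (P : Matrix (Fin N) (Fin N) ℝ) :
    (2 : ℂ) • szegedyProj P - 1 = blockDiag (fun i => rankOneReflection (colState P i)) := by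
  ext ⟨p₁, p₂⟩ ⟨q₁, q₂⟩
  rcases eq_or_ne p₁ q₁ with rfl | h <;>
    simp [szegedyProj, projState, _root_.blockDiag, rankOneReflection, vecMulVec_apply,
      colState, one_apply, Matrix.sum_apply, *, Ne.symm]

theorem szegedyWalk_factorization_general (N : ℕ)
    (P : Matrix (Fin N) (Fin N) ℝ)
    (Ui : Fin N → Matrix (Fin N) (Fin N) ℂ)
    (hUi : ∀ i, Ui i ∈ Matrix.unitaryGroup (Fin N) ℂ)
    (b : Fin N)
    (hb : ∀ i, (Ui i).mulVec (colState P i) = Pi.single b 1) :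
    swapOp N * ((2 : ℂ) • szegedyProj P - 1)
      = swapOp N * (blockDiag Ui)ᴴ * diagD N b * blockDiag Ui := by
  have hφ i : (Ui i)ᴴ *ᵥ Pi.single b 1 = colState P i :=
    conjTranspose_mulVec_of_mulVec_eq (hUi i) (hb i)
  rw [Matrix.mul_assoc, Matrix.mul_assoc, diagD_eq_blockDiag, conjTranspose_blockDiag,
    blockDiag_mul, blockDiag_mul, two_smul_szegedyProj_sub_one]
  simp_rw [← Matrix.mul_assoc, conjTranspose_mul_rankOneReflection_mul (hUi _), hφ]

/-- Factorization of the Szegedy walk operator: if each `U_i` is unitary with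
`U_i φ_i = e_b` for a fixed basis index `b`, then `U_walk = S U† D U`. -/
theorem szegedyWalk_factorization (N : ℕ) (hN : 1 ≤ N)
    (P : Matrix (Fin N) (Fin N) ℝ)
    (hnonneg : ∀ j i, 0 ≤ P j i) (hcol : ∀ i, ∑ j, P j i = 1)
    (Ui : Fin N → Matrix (Fin N) (Fin N) ℂ)
    (hUi : ∀ i, Ui i ∈ Matrix.unitaryGroup (Fin N) ℂ)
    (b : Fin N)
    (hb : ∀ i, (Ui i).mulVec (colState P i) = Pi.single b 1) :
    swapOp N * ((2 : ℂ) • szegedyProj P - 1)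
      = swapOp N * (blockDiag Ui)ᴴ * diagD N b * blockDiag Ui :=
  szegedyWalk_factorization_general N P Ui hUi b hb
end

section
/- Diagonalization of the Szegedy reflection for transition matrices whose column states are generated by powers of a fixed unitary: suppose there is an N×N unitary V such that φ_i = V^i φ_0 for all i ∈ {0,…,N−1} (e.g. V a cyclic rotation for a circulant transition matrix), and let K be an N×N unitary with K e_b = φ_0 for some b ∈ {0,…,N−1}. Then the block-diagonal operator U = Σ_{i=0}^{N−1} e_i e_i† ⊗ (K† (V†)^i) is unitary and satisfies U(2Π − I)U† = I_N ⊗ (2 e_b e_b† − I_N). -/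
/-!
Both `U` and `2Π − I` are block diagonal over the first tensor factor. The `i`-th block of
`2Π − I` is the reflection `2 φ_i φ_i† − I`, and the `i`-th block of `U` is the unitary
`K† (V†)^i = (V^i K)†`. Since `φ_i = V^i K e_b`, conjugation by this block sends the reflection
about `φ_i` to the reflection about `e_b`.
-/
open Matrix BigOperators

/-- The block-diagonal operator `U = Σ_i e_i e_i† ⊗ (K† (V†)^i)` on `ℂ^N ⊗ ℂ^N`. -/
noncomputable def powerBlockDiag {N : ℕ} (K V : Matrix (Fin N) (Fin N) ℂ) :
    Matrix (Fin N × Fin N) (Fin N × Fin N) ℂ :=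
  Matrix.of (fun p q =>
    if p.1 = q.1 then (Kᴴ * (Vᴴ) ^ (p.1 : ℕ)) p.2 q.2 else 0)

namespace Matrix

variable {m n o α : Type*}

theorem reindex_mul_mul_conjTranspose [Fintype m] [Fintype n] [Semiring α] [StarRing α]
    (e : m ≃ n) (A B : Matrix m m α) :
    reindex e e A * reindex e e B * (reindex e e A)ᴴ = reindex e e (A * B * Aᴴ) := by
  rw [conjTranspose_reindex]
  simp only [reindex_apply, submatrix_mul_equiv]

theorem reindex_mem_unitaryGroup [Fintype m] [DecidableEq m] [Fintype n] [DecidableEq n]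
    [CommRing α] [StarRing α] (e : m ≃ n) {A : Matrix m m α} (hA : A ∈ unitaryGroup m α) :
    reindex e e A ∈ unitaryGroup n α := by
  rw [mem_unitaryGroup_iff, star_eq_conjTranspose, conjTranspose_reindex, reindex_apply,
    reindex_apply, submatrix_mul_equiv, ← star_eq_conjTranspose, mem_unitaryGroup_iff.mp hA,
    submatrix_one_equiv]

theorem blockDiagonal_mul_mul_conjTranspose [Fintype m] [Fintype o] [DecidableEq o]
    [Semiring α] [StarRing α] (A B : o → Matrix m m α) :
    blockDiagonal A * blockDiagonal B * (blockDiagonal A)ᴴ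
      = blockDiagonal fun i => A i * B i * (A i)ᴴ := by
  rw [blockDiagonal_conjTranspose, blockDiagonal_mul, blockDiagonal_mul]

theorem blockDiagonal_mem_unitaryGroup [Fintype m] [DecidableEq m] [Fintype o] [DecidableEq o]
    [CommRing α] [StarRing α] {A : o → Matrix m m α} (hA : ∀ i, A i ∈ unitaryGroup m α) :
    blockDiagonal A ∈ unitaryGroup (m × o) α := by
  rw [mem_unitaryGroup_iff, star_eq_conjTranspose, blockDiagonal_conjTranspose,
    ← blockDiagonal_mul, ← blockDiagonal_one]
  exact congrArg blockDiagonal (funext fun i => mem_unitaryGroup_iff.mp (hA i))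

theorem mul_vecMulVec_star_mul_conjTranspose [Fintype m] [Fintype n] [CommRing α] [StarRing α]
    (A : Matrix m n α) (u : n → α) :
    A * vecMulVec u (star u) * Aᴴ = vecMulVec (A *ᵥ u) (star (A *ᵥ u)) := by
  rw [mul_vecMulVec, vecMulVec_mul, vecMul_conjTranspose, star_star]

theorem unitary_mul_smul_vecMulVec_sub_one_mul_conjTranspose [Fintype m] [DecidableEq m]
    [CommRing α] [StarRing α] {A : Matrix m m α} (hA : A ∈ unitaryGroup m α) (c : α)
    (u : m → α) :
    A * (c • vecMulVec u (star u) - 1) * Aᴴ = c • vecMulVec (A *ᵥ u) (star (A *ᵥ u)) - 1 := by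
  rw [mul_sub, sub_mul, Matrix.mul_smul, Matrix.smul_mul, mul_vecMulVec_star_mul_conjTranspose,
    mul_one, ← star_eq_conjTranspose, mem_unitaryGroup_iff.mp hA]

end Matrix

section

variable {N : ℕ}

/- Mathlib's `blockDiagonal` indexes blocks by the second coordinate, hence the reindexing
along `Equiv.prodComm`. -/
theorem two_smul_szegedyProj_sub_one_eq_reindex_blockDiagonal (P : Matrix (Fin N) (Fin N) ℝ) :
    (2 : ℂ) • szegedyProj P - 1 = reindex (Equiv.prodComm _ _) (Equiv.prodComm _ _)
      (blockDiagonal fun i => (2 : ℂ) • vecMulVec (colState P i) (star (colState P i)) - 1) := by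
  ext ⟨p, j⟩ ⟨q, k⟩
  by_cases hpq : p = q
  · subst hpq
    simp [szegedyProj, projState, Matrix.sum_apply, one_apply, vecMulVec_apply]
  · simp [szegedyProj, projState, Matrix.sum_apply, one_apply, blockDiagonal_apply, hpq,
      Ne.symm hpq]

theorem powerBlockDiag_eq_reindex_blockDiagonal (K V : Matrix (Fin N) (Fin N) ℂ) :
    powerBlockDiag K V = reindex (Equiv.prodComm _ _) (Equiv.prodComm _ _)
      (blockDiagonal fun i : Fin N => Kᴴ * Vᴴ ^ (i : ℕ)) := by
  ext ⟨p, j⟩ ⟨q, k⟩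
  simp only [powerBlockDiag, reindex_apply, submatrix_apply, of_apply, blockDiagonal_apply,
    Equiv.prodComm_symm, Equiv.prodComm_apply, Prod.swap_prod_mk]

theorem diagD_eq_reindex_blockDiagonal (b : Fin N) :
    diagD N b = reindex (Equiv.prodComm _ _) (Equiv.prodComm _ _)
      (blockDiagonal fun _ =>
        (2 : ℂ) • vecMulVec (Pi.single b 1) (star (Pi.single b 1)) - 1) := by
  ext ⟨p, j⟩ ⟨q, k⟩
  simp [diagD, blockDiagonal_apply, eq_comm, one_apply, vecMulVec_apply, Pi.single_apply]

end

theorem szegedyReflection_diagonalization_of_unitary_powers_general (N : ℕ) [NeZero N]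
    (P : Matrix (Fin N) (Fin N) ℝ)
    (V : Matrix (Fin N) (Fin N) ℂ) (hV : V ∈ Matrix.unitaryGroup (Fin N) ℂ)
    (hphi : ∀ i : Fin N, colState P i = (V ^ (i : ℕ)).mulVec (colState P 0))
    (K : Matrix (Fin N) (Fin N) ℂ) (hK : K ∈ Matrix.unitaryGroup (Fin N) ℂ)
    (b : Fin N) (hKb : K.mulVec (Pi.single b 1) = colState P 0) :
    powerBlockDiag K V ∈ Matrix.unitaryGroup (Fin N × Fin N) ℂ ∧
    powerBlockDiag K V * ((2 : ℂ) • szegedyProj P - 1) * (powerBlockDiag K V)ᴴ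
      = diagD N b := by
  have hW : ∀ i : Fin N, V ^ (i : ℕ) * K ∈ unitaryGroup (Fin N) ℂ :=
    fun i => mul_mem (pow_mem hV _) hK
  have hstar : ∀ i : Fin N, Kᴴ * Vᴴ ^ (i : ℕ) = star (V ^ (i : ℕ) * K) := fun i => by
    rw [star_mul, star_pow, star_eq_conjTranspose, star_eq_conjTranspose]
  have hφ : ∀ i : Fin N, colState P i = (V ^ (i : ℕ) * K) *ᵥ Pi.single b 1 := fun i => by
    rw [hphi i, ← hKb, mulVec_mulVec]
  rw [powerBlockDiag_eq_reindex_blockDiagonal,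
    two_smul_szegedyProj_sub_one_eq_reindex_blockDiagonal, diagD_eq_reindex_blockDiagonal,
    reindex_mul_mul_conjTranspose, blockDiagonal_mul_mul_conjTranspose]
  simp only [hstar]
  refine ⟨reindex_mem_unitaryGroup _ <|
    blockDiagonal_mem_unitaryGroup fun i => Unitary.star_mem (hW i), ?_⟩
  congr
  funext i
  rw [unitary_mul_smul_vecMulVec_sub_one_mul_conjTranspose (Unitary.star_mem (hW i)), hφ i,
    mulVec_mulVec, mem_unitaryGroup_iff'.mp (hW i), one_mulVec]

/-- Diagonalization of the Szegedy reflection for transition matrices whose column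
states are generated by powers of a fixed unitary: if `φ_i = V^i φ_0` for all `i`
(`V` unitary) and `K` is a unitary with `K e_b = φ_0`, then the block-diagonal
operator `U = Σ_i e_i e_i† ⊗ (K† (V†)^i)` is unitary and
`U(2Π − I)U† = I_N ⊗ (2 e_b e_b† − I_N)`. -/
theorem szegedyReflection_diagonalization_of_unitary_powers (N : ℕ) [NeZero N]
    (P : Matrix (Fin N) (Fin N) ℝ)
    (hnonneg : ∀ j i, 0 ≤ P j i) (hcol : ∀ i, ∑ j, P j i = 1)
    (V : Matrix (Fin N) (Fin N) ℂ) (hV : V ∈ Matrix.unitaryGroup (Fin N) ℂ)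
    (hphi : ∀ i : Fin N, colState P i = (V ^ (i : ℕ)).mulVec (colState P 0))
    (K : Matrix (Fin N) (Fin N) ℂ) (hK : K ∈ Matrix.unitaryGroup (Fin N) ℂ)
    (b : Fin N) (hKb : K.mulVec (Pi.single b 1) = colState P 0) :
    powerBlockDiag K V ∈ Matrix.unitaryGroup (Fin N × Fin N) ℂ ∧
    powerBlockDiag K V * ((2 : ℂ) • szegedyProj P - 1) * (powerBlockDiag K V)ᴴ
      = diagD N b :=
  szegedyReflection_diagonalization_of_unitary_powers_general N P V hV hphi K hK b hKb
end
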